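/- Let N_A, N_B ≥ 1, τ > 0, and let p^A ∈ ℝ^{N_A}, p^B ∈ ℝ^{N_B} be the projections of the vertices of two polygons onto a fixed axis. Define the smoothed projection bounds P̃max^A = m̃ax_τ(p^A), P̃min^A = m̃in_τ(p^A) (analogously for B), the smoothed overlap o = m̃in_τ(P̃max^A, P̃max^B) − m̃ax_τ(P̃min^A, P̃min^B), and the exact overlap o* = min(max_i p^A_i, max_j p^B_j) − max(min_i p^A_i, min_j p^B_j), where m̃ax_τ(x) = τ·log(∑ exp(x_i/τ)) and m̃in_τ(x) = −m̃ax_τ(−x). Then o* − 2τ·log 2 ≤ o ≤ o* + 2τ·max(log N_A, log N_B). -/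

import Mathlib

/-- LogSumExp smooth maximum with temperature `τ`. -/
noncomputable def smoothMax (τ : ℝ) {N : ℕ} (x : Fin N → ℝ) : ℝ :=
  τ * Real.log (∑ i, Real.exp (x i / τ))

/-- LogSumExp smooth minimum with temperature `τ`: `smoothMin τ x = −smoothMax τ (−x)`. -/
noncomputable def smoothMin (τ : ℝ) {N : ℕ} (x : Fin N → ℝ) : ℝ :=
  -smoothMax τ (fun i => -x i)

/-- Binary LogSumExp smooth maximum. -/
noncomputable def smoothMax2 (τ a b : ℝ) : ℝ :=
  smoothMax τ (fun i : Fin 2 => if i = 0 then a else b)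

/-- Binary LogSumExp smooth minimum. -/
noncomputable def smoothMin2 (τ a b : ℝ) : ℝ :=
  smoothMin τ (fun i : Fin 2 => if i = 0 then a else b)

lemma sup'_le_smoothMax {N : ℕ} (hN : (Finset.univ : Finset (Fin N)).Nonempty)
    (τ : ℝ) (hτ : 0 < τ) (x : Fin N → ℝ) :
    Finset.univ.sup' hN x ≤ smoothMax τ x := by
  rw [Finset.sup'_le_iff]
  intro i _
  have hsum : Real.exp (x i / τ) ≤ ∑ j, Real.exp (x j / τ) :=
    Finset.single_le_sum (f := fun j => Real.exp (x j / τ))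
      (fun j _ => (Real.exp_pos _).le) (Finset.mem_univ i)
  have hlog := Real.log_le_log (Real.exp_pos _) hsum
  rw [Real.log_exp] at hlog
  have := (div_le_iff₀ hτ).mp hlog
  unfold smoothMax
  linarith

lemma smoothMax_le {N : ℕ} (hN : (Finset.univ : Finset (Fin N)).Nonempty)
    (τ : ℝ) (hτ : 0 < τ) (x : Fin N → ℝ) :
    smoothMax τ x ≤ Finset.univ.sup' hN x + τ * Real.log N := by
  set M := Finset.univ.sup' hN x with hM
  have hsum : ∑ j, Real.exp (x j / τ) ≤ N * Real.exp (M / τ) := by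
    calc ∑ j, Real.exp (x j / τ) ≤ ∑ _j : Fin N, Real.exp (M / τ) := by
          apply Finset.sum_le_sum
          intro j _
          have := Finset.le_sup' x (Finset.mem_univ j)
          exact Real.exp_le_exp.mpr (by gcongr)
      _ = N * Real.exp (M / τ) := by simp [Finset.sum_const, Finset.card_univ]
  have hpos : (0:ℝ) < ∑ j, Real.exp (x j / τ) :=
    Finset.sum_pos (fun j _ => Real.exp_pos _) hN
  have hlog := Real.log_le_log hpos hsum
  have hNpos : (0:ℝ) < N := by
    have := hN.card_pos
    have h0 : 0 < N := by simpa [Finset.card_univ] using this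
    exact_mod_cast h0
  rw [Real.log_mul (ne_of_gt hNpos) (ne_of_gt (Real.exp_pos _)), Real.log_exp] at hlog
  unfold smoothMax
  have hexp : τ * (Real.log N + M / τ) = τ * Real.log N + M := by field_simp
  have h2 := mul_le_mul_of_nonneg_left hlog hτ.le
  linarith

lemma sup'_neg_eq {N : ℕ} (hN : (Finset.univ : Finset (Fin N)).Nonempty) (x : Fin N → ℝ) :
    Finset.univ.sup' hN (fun i => -x i) = -(Finset.univ.inf' hN x) := by
  apply le_antisymm
  · rw [Finset.sup'_le_iff]
    intro i _
    simp only [neg_le_neg_iff]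
    exact Finset.inf'_le x (Finset.mem_univ i)
  · rw [neg_le, Finset.le_inf'_iff]
    intro i _
    rw [neg_le]
    exact Finset.le_sup' (fun i => -x i) (Finset.mem_univ i)

lemma smoothMin_le_inf' {N : ℕ} (hN : (Finset.univ : Finset (Fin N)).Nonempty)
    (τ : ℝ) (hτ : 0 < τ) (x : Fin N → ℝ) :
    smoothMin τ x ≤ Finset.univ.inf' hN x := by
  have h := sup'_le_smoothMax hN τ hτ (fun i => -x i)
  rw [sup'_neg_eq] at h
  unfold smoothMin
  linarith

lemma inf'_le_smoothMin {N : ℕ} (hN : (Finset.univ : Finset (Fin N)).Nonempty)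
    (τ : ℝ) (hτ : 0 < τ) (x : Fin N → ℝ) :
    Finset.univ.inf' hN x - τ * Real.log N ≤ smoothMin τ x := by
  have h := smoothMax_le hN τ hτ (fun i => -x i)
  rw [sup'_neg_eq] at h
  unfold smoothMin
  linarith

lemma fin2_nonempty : (Finset.univ : Finset (Fin 2)).Nonempty := ⟨0, Finset.mem_univ 0⟩

lemma sup'_fin2 (a b : ℝ) :
    Finset.univ.sup' fin2_nonempty (fun i : Fin 2 => if i = 0 then a else b) = max a b := by
  apply le_antisymm
  · rw [Finset.sup'_le_iff]
    intro i _
    fin_cases i <;> simp [le_max_left, le_max_right]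
  · apply max_le
    · have := Finset.le_sup' (fun i : Fin 2 => if i = 0 then a else b) (Finset.mem_univ 0)
      simpa using this
    · have := Finset.le_sup' (fun i : Fin 2 => if i = 0 then a else b) (Finset.mem_univ 1)
      simpa using this

lemma inf'_fin2 (a b : ℝ) :
    Finset.univ.inf' fin2_nonempty (fun i : Fin 2 => if i = 0 then a else b) = min a b := by
  apply le_antisymm
  · apply le_min
    · have := Finset.inf'_le (fun i : Fin 2 => if i = 0 then a else b) (Finset.mem_univ 0)
      simpa using this
    · have := Finset.inf'_le (fun i : Fin 2 => if i = 0 then a else b) (Finset.mem_univ 1)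
      simpa using this
  · rw [Finset.le_inf'_iff]
    intro i _
    fin_cases i <;> simp [min_le_left, min_le_right]

lemma max_le_smoothMax2 (τ : ℝ) (hτ : 0 < τ) (a b : ℝ) : max a b ≤ smoothMax2 τ a b := by
  have := sup'_le_smoothMax fin2_nonempty τ hτ (fun i : Fin 2 => if i = 0 then a else b)
  rw [sup'_fin2] at this
  exact this

lemma smoothMax2_le (τ : ℝ) (hτ : 0 < τ) (a b : ℝ) :
    smoothMax2 τ a b ≤ max a b + τ * Real.log 2 := by
  have := smoothMax_le fin2_nonempty τ hτ (fun i : Fin 2 => if i = 0 then a else b)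
  rw [sup'_fin2] at this
  simpa [smoothMax2] using this

lemma smoothMin2_le (τ : ℝ) (hτ : 0 < τ) (a b : ℝ) : smoothMin2 τ a b ≤ min a b := by
  have := smoothMin_le_inf' fin2_nonempty τ hτ (fun i : Fin 2 => if i = 0 then a else b)
  rw [inf'_fin2] at this
  exact this

lemma min_sub_le_smoothMin2 (τ : ℝ) (hτ : 0 < τ) (a b : ℝ) :
    min a b - τ * Real.log 2 ≤ smoothMin2 τ a b := by
  have := inf'_le_smoothMin fin2_nonempty τ hτ (fun i : Fin 2 => if i = 0 then a else b)
  rw [inf'_fin2] at this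
  simpa [smoothMin2] using this

/-- Two-sided bound for the smooth SAT overlap along one axis: with smoothed projection
bounds `P̃max = smoothMax τ p`, `P̃min = smoothMin τ p` for each polygon, the smoothed
overlap `o = smoothMin τ (P̃max^A, P̃max^B) − smoothMax τ (P̃min^A, P̃min^B)` satisfies
`o* − 2τ·log 2 ≤ o ≤ o* + 2τ·max(log N_A, log N_B)` where
`o* = min(max p^A, max p^B) − max(min p^A, min p^B)` is the exact overlap. -/
theorem smooth_sat_overlap_bounds (NA NB : ℕ) (hNA : 1 ≤ NA) (hNB : 1 ≤ NB)
    (τ : ℝ) (hτ : 0 < τ) (pA : Fin NA → ℝ) (pB : Fin NB → ℝ) :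
    (min (Finset.univ.sup' (Finset.univ_nonempty_iff.mpr (Fin.pos_iff_nonempty.mp hNA)) pA)
         (Finset.univ.sup' (Finset.univ_nonempty_iff.mpr (Fin.pos_iff_nonempty.mp hNB)) pB)
       - max (Finset.univ.inf' (Finset.univ_nonempty_iff.mpr (Fin.pos_iff_nonempty.mp hNA)) pA)
             (Finset.univ.inf' (Finset.univ_nonempty_iff.mpr (Fin.pos_iff_nonempty.mp hNB)) pB))
        - 2 * τ * Real.log 2
      ≤ smoothMin2 τ (smoothMax τ pA) (smoothMax τ pB)
          - smoothMax2 τ (smoothMin τ pA) (smoothMin τ pB) ∧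
    smoothMin2 τ (smoothMax τ pA) (smoothMax τ pB)
        - smoothMax2 τ (smoothMin τ pA) (smoothMin τ pB)
      ≤ (min (Finset.univ.sup' (Finset.univ_nonempty_iff.mpr (Fin.pos_iff_nonempty.mp hNA)) pA)
             (Finset.univ.sup' (Finset.univ_nonempty_iff.mpr (Fin.pos_iff_nonempty.mp hNB)) pB)
          - max (Finset.univ.inf' (Finset.univ_nonempty_iff.mpr (Fin.pos_iff_nonempty.mp hNA)) pA)
                (Finset.univ.inf' (Finset.univ_nonempty_iff.mpr (Fin.pos_iff_nonempty.mp hNB)) pB))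
        + 2 * τ * max (Real.log NA) (Real.log NB) := by
  set hA := Finset.univ_nonempty_iff.mpr (Fin.pos_iff_nonempty.mp hNA)
  set hB := Finset.univ_nonempty_iff.mpr (Fin.pos_iff_nonempty.mp hNB)
  set MA := Finset.univ.sup' hA pA
  set MB := Finset.univ.sup' hB pB
  set mA := Finset.univ.inf' hA pA
  set mB := Finset.univ.inf' hB pB
  set lA := Real.log NA
  set lB := Real.log NB
  have hsA1 : MA ≤ smoothMax τ pA := sup'_le_smoothMax hA τ hτ pA
  have hsA2 : smoothMax τ pA ≤ MA + τ * lA := smoothMax_le hA τ hτ pA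
  have hsB1 : MB ≤ smoothMax τ pB := sup'_le_smoothMax hB τ hτ pB
  have hsB2 : smoothMax τ pB ≤ MB + τ * lB := smoothMax_le hB τ hτ pB
  have htA1 : smoothMin τ pA ≤ mA := smoothMin_le_inf' hA τ hτ pA
  have htA2 : mA - τ * lA ≤ smoothMin τ pA := inf'_le_smoothMin hA τ hτ pA
  have htB1 : smoothMin τ pB ≤ mB := smoothMin_le_inf' hB τ hτ pB
  have htB2 : mB - τ * lB ≤ smoothMin τ pB := inf'_le_smoothMin hB τ hτ pB
  have hlA : τ * lA ≤ τ * max lA lB := mul_le_mul_of_nonneg_left (le_max_left _ _) hτ.le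
  have hlB : τ * lB ≤ τ * max lA lB := mul_le_mul_of_nonneg_left (le_max_right _ _) hτ.le
  constructor
  · -- lower bound
    have h1 : min MA MB - τ * Real.log 2
        ≤ smoothMin2 τ (smoothMax τ pA) (smoothMax τ pB) := by
      have := min_sub_le_smoothMin2 τ hτ (smoothMax τ pA) (smoothMax τ pB)
      have hmin : min MA MB ≤ min (smoothMax τ pA) (smoothMax τ pB) := min_le_min hsA1 hsB1
      linarith
    have h2 : smoothMax2 τ (smoothMin τ pA) (smoothMin τ pB)
        ≤ max mA mB + τ * Real.log 2 := by
      have := smoothMax2_le τ hτ (smoothMin τ pA) (smoothMin τ pB)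
      have hmax : max (smoothMin τ pA) (smoothMin τ pB) ≤ max mA mB := max_le_max htA1 htB1
      linarith
    linarith
  · -- upper bound
    have h1 : smoothMin2 τ (smoothMax τ pA) (smoothMax τ pB)
        ≤ min MA MB + τ * max lA lB := by
      have hle := smoothMin2_le τ hτ (smoothMax τ pA) (smoothMax τ pB)
      rcases le_total MA MB with h | h
      · have : min (smoothMax τ pA) (smoothMax τ pB) ≤ MA + τ * lA :=
          le_trans (min_le_left _ _) hsA2
        have hm : min MA MB = MA := min_eq_left h
        linarith
      · have : min (smoothMax τ pA) (smoothMax τ pB) ≤ MB + τ * lB :=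
          le_trans (min_le_right _ _) hsB2
        have hm : min MA MB = MB := min_eq_right h
        linarith
    have h2 : max mA mB - τ * max lA lB
        ≤ smoothMax2 τ (smoothMin τ pA) (smoothMin τ pB) := by
      have hle := max_le_smoothMax2 τ hτ (smoothMin τ pA) (smoothMin τ pB)
      rcases le_total mA mB with h | h
      · have : mB - τ * lB ≤ max (smoothMin τ pA) (smoothMin τ pB) :=
          le_trans (by linarith [le_max_right (smoothMin τ pA) (smoothMin τ pB)] : mB - τ * lB ≤ mB - τ * lB) (le_trans htB2 (le_max_right _ _))
        have hm : max mA mB = mB := max_eq_right h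
        linarith
      · have : mA - τ * lA ≤ max (smoothMin τ pA) (smoothMin τ pB) :=
          le_trans htA2 (le_max_left _ _)
        have hm : max mA mB = mA := max_eq_left h
        linarith
    linarith
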